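/- arXiv:math/0008044 — 4 statements merged into one kernel-verified Lean document; each statement's English description precedes it below -/
import Mathlib

section
/- Let L be the Lie algebra with basis {H, E, A, B} and relations [H,E]=E, [H,A]=αA, [H,B]=βB, [A,B]=E, [E,A]=[E,B]=0, with α+β=1. Then the element r = H⊗E − E⊗H + A⊗B − B⊗A satisfies the classical Yang–Baxter equation [r₁₂,r₁₃]+[r₁₂,r₂₃]+[r₁₃,r₂₃]=0 in U(L)^⊗3. -/
/-!
Polarising the classical Yang–Baxter expression gives a bilinear form, and on bivectors it is
given by Schouten-bracket formulas: `CYBE(a ∧ b) = a ∧ b ∧ ⁅a, b⁆`, and the cross term of `a ∧ b`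
and `c ∧ d` is `⁅a, c⁆ ∧ b ∧ d - ⁅a, d⁆ ∧ b ∧ c - ⁅b, c⁆ ∧ a ∧ d + ⁅b, d⁆ ∧ a ∧ c`.
For `r = H ∧ E + A ∧ B` the Jordanian part contributes `H ∧ E ∧ E = 0`, the part `A ∧ B`
contributes `A ∧ B ∧ E`, and the cross term contributes `(α + β) A ∧ E ∧ B`; these cancel
exactly when `α + β = 1`.
-/

open TensorProduct

attribute [local instance] LieRing.ofAssociativeRing

namespace YangBaxter

open Algebra.TensorProduct

variable (R : Type*) {A : Type*} [CommRing R] [Ring A] [Algebra R A]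

def leg₁₂ : A ⊗[R] A →ₐ[R] A ⊗[R] (A ⊗[R] A) := map (AlgHom.id R A) includeLeft

def leg₁₃ : A ⊗[R] A →ₐ[R] A ⊗[R] (A ⊗[R] A) := map (AlgHom.id R A) includeRight

def leg₂₃ : A ⊗[R] A →ₐ[R] A ⊗[R] (A ⊗[R] A) := includeRight

@[simp] lemma leg₁₂_tmul (a b : A) : leg₁₂ R (a ⊗ₜ b) = a ⊗ₜ (b ⊗ₜ (1 : A)) := rfl

@[simp] lemma leg₁₃_tmul (a b : A) : leg₁₃ R (a ⊗ₜ b) = a ⊗ₜ ((1 : A) ⊗ₜ b) := rfl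

@[simp] lemma leg₂₃_tmul (a b : A) : leg₂₃ R (a ⊗ₜ b) = (1 : A) ⊗ₜ (a ⊗ₜ b) := rfl

def cybeForm : (A ⊗[R] A) →ₗ[R] (A ⊗[R] A) →ₗ[R] A ⊗[R] (A ⊗[R] A) :=
  LinearMap.mk₂ R
    (fun r s ↦ ⁅leg₁₂ R r, leg₁₃ R s⁆ + ⁅leg₁₂ R r, leg₂₃ R s⁆ + ⁅leg₁₃ R r, leg₂₃ R s⁆)
    (by intros; simp only [map_add, add_lie]; abel)
    (by intros; simp only [map_smul, Ring.lie_def, smul_mul_assoc, mul_smul_comm, smul_sub,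
      smul_add])
    (by intros; simp only [map_add, lie_add]; abel)
    (by intros; simp only [map_smul, Ring.lie_def, smul_mul_assoc, mul_smul_comm, smul_sub,
      smul_add])

lemma cybeForm_apply (r s : A ⊗[R] A) :
    cybeForm R r s = ⁅leg₁₂ R r, leg₁₃ R s⁆ + ⁅leg₁₂ R r, leg₂₃ R s⁆ + ⁅leg₁₃ R r, leg₂₃ R s⁆ :=
  rfl

lemma cybeForm_tmul_tmul (a b c d : A) :
    cybeForm R (a ⊗ₜ b) (c ⊗ₜ d) =
      ⁅a, c⁆ ⊗ₜ (b ⊗ₜ d) + a ⊗ₜ (⁅b, c⁆ ⊗ₜ d) + a ⊗ₜ (c ⊗ₜ ⁅b, d⁆) := by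
  simp only [cybeForm_apply, leg₁₂_tmul, leg₁₃_tmul, leg₂₃_tmul, Ring.lie_def, tmul_mul_tmul,
    mul_one, one_mul, sub_tmul, tmul_sub]

variable {R}

def wedge (a b : A) : A ⊗[R] A := a ⊗ₜ b - b ⊗ₜ a

def wedge₃ (a b c : A) : A ⊗[R] (A ⊗[R] A) :=
  a ⊗ₜ (b ⊗ₜ c) + b ⊗ₜ (c ⊗ₜ a) + c ⊗ₜ (a ⊗ₜ b)
    - a ⊗ₜ (c ⊗ₜ b) - c ⊗ₜ (b ⊗ₜ a) - b ⊗ₜ (a ⊗ₜ c)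

lemma cybeForm_wedge_self (a b : A) :
    cybeForm R (wedge a b) (wedge a b) = wedge₃ a b ⁅a, b⁆ := by
  simp only [wedge, wedge₃, map_sub, LinearMap.sub_apply, cybeForm_tmul_tmul, lie_self,
    zero_tmul, tmul_zero, ← lie_skew a b, neg_tmul, tmul_neg]
  abel

lemma cybeForm_wedge_add_swap (a b c d : A) :
    cybeForm R (wedge a b) (wedge c d) + cybeForm R (wedge c d) (wedge a b) =
      wedge₃ ⁅a, c⁆ b d - wedge₃ ⁅a, d⁆ b c - wedge₃ ⁅b, c⁆ a d + wedge₃ ⁅b, d⁆ a c := by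
  simp only [wedge, wedge₃, map_sub, LinearMap.sub_apply, cybeForm_tmul_tmul,
    ← lie_skew a c, ← lie_skew a d, ← lie_skew b c, ← lie_skew b d, neg_tmul, tmul_neg]
  abel

end YangBaxter

open YangBaxter

theorem extended_jordanian_rmatrix_cybe_general {k : Type*} [Field k]
    {L : Type*} [LieRing L] [LieAlgebra k L] (α β : k)
    (H E A B : L) (hHE : ⁅H, E⁆ = E) (hHA : ⁅H, A⁆ = α • A)
    (hHB : ⁅H, B⁆ = β • B) (hAB : ⁅A, B⁆ = E)
    (hEA : ⁅E, A⁆ = 0) (hEB : ⁅E, B⁆ = 0) (hαβ : α + β = 1) :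
    let U := UniversalEnvelopingAlgebra k L
    let ι : L →ₗ⁅k⁆ U := UniversalEnvelopingAlgebra.ι k
    let r12 : U ⊗[k] (U ⊗[k] U) :=
      ι H ⊗ₜ (ι E ⊗ₜ (1:U)) - ι E ⊗ₜ (ι H ⊗ₜ (1:U)) +
        ι A ⊗ₜ (ι B ⊗ₜ (1:U)) - ι B ⊗ₜ (ι A ⊗ₜ (1:U))
    let r13 : U ⊗[k] (U ⊗[k] U) :=
      ι H ⊗ₜ ((1:U) ⊗ₜ ι E) - ι E ⊗ₜ ((1:U) ⊗ₜ ι H) +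
        ι A ⊗ₜ ((1:U) ⊗ₜ ι B) - ι B ⊗ₜ ((1:U) ⊗ₜ ι A)
    let r23 : U ⊗[k] (U ⊗[k] U) :=
      (1:U) ⊗ₜ (ι H ⊗ₜ ι E) - (1:U) ⊗ₜ (ι E ⊗ₜ ι H) +
        (1:U) ⊗ₜ (ι A ⊗ₜ ι B) - (1:U) ⊗ₜ (ι B ⊗ₜ ι A)
    (r12 * r13 - r13 * r12) + (r12 * r23 - r23 * r12) +
      (r13 * r23 - r23 * r13) = 0 := by
  intro U ι r12 r13 r23
  set r₁ : U ⊗[k] U := wedge (ι H) (ι E)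
  set r₂ : U ⊗[k] U := wedge (ι A) (ι B)
  have h_cybe : (r12 * r13 - r13 * r12) + (r12 * r23 - r23 * r12) + (r13 * r23 - r23 * r13) =
      cybeForm k (r₁ + r₂) (r₁ + r₂) := by
    rw [cybeForm_apply]
    simp only [Ring.lie_def, r₁, r₂, wedge, map_add, map_sub, leg₁₂_tmul, leg₁₃_tmul, leg₂₃_tmul,
      r12, r13, r23, ← add_sub_assoc]
  have h_polarize : cybeForm k (r₁ + r₂) (r₁ + r₂) =
      cybeForm k r₁ r₁ + cybeForm k r₂ r₂ + (cybeForm k r₁ r₂ + cybeForm k r₂ r₁) := by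
    simp only [map_add, LinearMap.add_apply]; abel
  rw [h_cybe, h_polarize, cybeForm_wedge_self, cybeForm_wedge_self, cybeForm_wedge_add_swap]
  simp only [← LieHom.map_lie, hHE, hAB, hHA, hHB, hEA, hEB, map_smul, map_zero]
  linear_combination (norm := skip) hαβ • wedge₃ (ι A) (ι E) (ι B)
  simp only [wedge₃, ← smul_tmul', tmul_smul, zero_tmul, tmul_zero]
  module

/-- for the 4-dimensional carrier algebra `L` of the extended
Jordanian twist, with `[H,E]=E, [H,A]=αA, [H,B]=βB, [A,B]=E, [E,A]=[E,B]=0`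
and `α+β=1`, the element `r = H⊗E − E⊗H + A⊗B − B⊗A` satisfies the classical
Yang–Baxter equation in `U(L)⊗U(L)⊗U(L)`. -/
theorem extended_jordanian_rmatrix_cybe {k : Type*} [Field k] [CharZero k]
    {L : Type*} [LieRing L] [LieAlgebra k L] (α β : k)
    (H E A B : L) (hHE : ⁅H, E⁆ = E) (hHA : ⁅H, A⁆ = α • A)
    (hHB : ⁅H, B⁆ = β • B) (hAB : ⁅A, B⁆ = E)
    (hEA : ⁅E, A⁆ = 0) (hEB : ⁅E, B⁆ = 0) (hαβ : α + β = 1) :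
    let U := UniversalEnvelopingAlgebra k L
    let ι : L →ₗ⁅k⁆ U := UniversalEnvelopingAlgebra.ι k
    let r12 : U ⊗[k] (U ⊗[k] U) :=
      ι H ⊗ₜ (ι E ⊗ₜ (1:U)) - ι E ⊗ₜ (ι H ⊗ₜ (1:U)) +
        ι A ⊗ₜ (ι B ⊗ₜ (1:U)) - ι B ⊗ₜ (ι A ⊗ₜ (1:U))
    let r13 : U ⊗[k] (U ⊗[k] U) :=
      ι H ⊗ₜ ((1:U) ⊗ₜ ι E) - ι E ⊗ₜ ((1:U) ⊗ₜ ι H) +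
        ι A ⊗ₜ ((1:U) ⊗ₜ ι B) - ι B ⊗ₜ ((1:U) ⊗ₜ ι A)
    let r23 : U ⊗[k] (U ⊗[k] U) :=
      (1:U) ⊗ₜ (ι H ⊗ₜ ι E) - (1:U) ⊗ₜ (ι E ⊗ₜ ι H) +
        (1:U) ⊗ₜ (ι A ⊗ₜ ι B) - (1:U) ⊗ₜ (ι B ⊗ₜ ι A)
    (r12 * r13 - r13 * r12) + (r12 * r23 - r23 * r12) +
      (r13 * r23 - r23 * r13) = 0 :=
  extended_jordanian_rmatrix_cybe_general α β H E A B hHE hHA hHB hAB hEA hEB hαβ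
end

section
/- Let H be a Hopf algebra over a commutative ring and let F ∈ H⊗H be invertible and satisfy the twist (2-cocycle) equation F₁₂·(Δ⊗id)(F) = F₂₃·(id⊗Δ)(F) together with (ε⊗id)F = (id⊗ε)F = 1. Then the twisted coproduct Δ_F(x) = F·Δ(x)·F⁻¹ is coassociative: (Δ_F⊗id)∘Δ_F = (id⊗Δ_F)∘Δ_F. -/
/-!
Writing `Δ_F(x) = F Δ(x) F⁻¹`, both sides of the coassociativity identity are conjugates of the
same element `(Δ ⊗ id)Δ(x) = (id ⊗ Δ)Δ(x)`: the left one by `F₁₂ (Δ ⊗ id)(F)`, the right one by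
`F₂₃ (id ⊗ Δ)(F)`, because `Δ ⊗ id` and `id ⊗ Δ` are algebra maps. The cocycle equation says that
these two conjugating units coincide.
-/

open TensorProduct

theorem mul_map_conj_mul_inv_eq_of_mul_eq {M N F : Type*} [Monoid M] [Monoid N]
    [FunLike F M N] [MonoidHomClass F M N] (i d i' d' : F) (u : Mˣ) (y : M)
    (hu : i u * d u = i' u * d' u) (hy : d y = d' y) :
    i u * d (u * y * ↑u⁻¹) * i ↑u⁻¹ = i' u * d' (u * y * ↑u⁻¹) * i' ↑u⁻¹ := by
  have conj_eq (i d : F) : i u * d (u * y * ↑u⁻¹) * i ↑u⁻¹ =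
      ↑(Units.map (i : M →* N) u * Units.map (d : M →* N) u) * d y *
        ↑(Units.map (i : M →* N) u * Units.map (d : M →* N) u)⁻¹ := by
    simp [map_mul, mul_assoc]
  have hu' : Units.map (i : M →* N) u * Units.map (d : M →* N) u =
      Units.map (i' : M →* N) u * Units.map (d' : M →* N) u := Units.ext hu
  rw [conj_eq, conj_eq, hy, hu']

namespace TensorProduct

variable {R A B C : Type*} [CommSemiring R] [Semiring A] [Algebra R A] [Semiring B] [Algebra R B]
  [AddCommMonoid C] [Module R C]

theorem map_mulLeft_mulRight_id_apply (a b : A) (f : C →ₗ[R] A) (z : C ⊗[R] B) :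
    map (LinearMap.mulLeft R a ∘ₗ LinearMap.mulRight R b ∘ₗ f) LinearMap.id z =
      (a ⊗ₜ 1) * map f LinearMap.id z * (b ⊗ₜ 1) := by
  induction z using TensorProduct.induction_on with
  | zero => simp
  | tmul c x => simp [Algebra.TensorProduct.tmul_mul_tmul, mul_assoc]
  | add z z' hz hz' => simp only [map_add, hz, hz', mul_add, add_mul]

theorem map_id_mulLeft_mulRight_apply (a b : A) (f : C →ₗ[R] A) (z : B ⊗[R] C) :
    map LinearMap.id (LinearMap.mulLeft R a ∘ₗ LinearMap.mulRight R b ∘ₗ f) z =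
      (1 ⊗ₜ a) * map LinearMap.id f z * (1 ⊗ₜ b) := by
  induction z using TensorProduct.induction_on with
  | zero => simp
  | tmul x c => simp [Algebra.TensorProduct.tmul_mul_tmul, mul_assoc]
  | add z z' hz hz' => simp only [map_add, hz, hz', mul_add, add_mul]

end TensorProduct

theorem twisted_coproduct_coassoc_general {R : Type*} [CommRing R]
    {H : Type*} [Ring H] [HopfAlgebra R H]
    (F Finv : H ⊗[R] H)
    (hinv : F * Finv = 1 ∧ Finv * F = 1)
    (hcocycle :
      (Algebra.TensorProduct.assoc R R R H H H) (F ⊗ₜ (1:H)) *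
          (Algebra.TensorProduct.assoc R R R H H H)
            ((TensorProduct.map Coalgebra.comul LinearMap.id) F) =
        ((1:H) ⊗ₜ F) * (TensorProduct.map LinearMap.id Coalgebra.comul) F) :
    let ΔF : H →ₗ[R] H ⊗[R] H :=
      (LinearMap.mulLeft R F) ∘ₗ (LinearMap.mulRight R Finv) ∘ₗ Coalgebra.comul
    ∀ x : H,
      (Algebra.TensorProduct.assoc R R R H H H)
          ((TensorProduct.map ΔF LinearMap.id) (ΔF x)) =
        (TensorProduct.map LinearMap.id ΔF) (ΔF x) := by
  intro ΔF x
  let φ := (Algebra.TensorProduct.assoc R R R H H H).toAlgHom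
  let comul₁₂ := φ.comp <|
    Algebra.TensorProduct.map (Bialgebra.comulAlgHom R H) (AlgHom.id R H)
  let comul₂₃ := Algebra.TensorProduct.map (AlgHom.id R H) (Bialgebra.comulAlgHom R H)
  let incl₁₂ := φ.comp Algebra.TensorProduct.includeLeft
  have hΔF : ΔF x = F * Coalgebra.comul x * Finv := by simp [ΔF, mul_assoc]
  calc φ (map ΔF LinearMap.id (ΔF x))
      = incl₁₂ F * comul₁₂ (F * Coalgebra.comul x * Finv) * incl₁₂ Finv := by
        rw [map_mulLeft_mulRight_id_apply, hΔF, map_mul, map_mul]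
        rfl
    _ = Algebra.TensorProduct.includeRight F * comul₂₃ (F * Coalgebra.comul x * Finv) *
          Algebra.TensorProduct.includeRight Finv :=
        mul_map_conj_mul_inv_eq_of_mul_eq _ _ _ _ ⟨F, Finv, hinv.1, hinv.2⟩ _ hcocycle
          (Coalgebra.coassoc_apply x)
    _ = map LinearMap.id ΔF (ΔF x) := by
        rw [map_id_mulLeft_mulRight_apply, hΔF]
        rfl

/-- if `F ∈ H⊗H` is invertible and satisfies the twist (2-cocycle)
equation `F₁₂·(Δ⊗id)(F) = F₂₃·(id⊗Δ)(F)` and the counit conditions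
`(ε⊗id)F = (id⊗ε)F = 1`, then the twisted coproduct `Δ_F(x) = F·Δ(x)·F⁻¹`
is coassociative. -/
theorem twisted_coproduct_coassoc {R : Type*} [CommRing R]
    {H : Type*} [Ring H] [HopfAlgebra R H]
    (F Finv : H ⊗[R] H)
    (hinv : F * Finv = 1 ∧ Finv * F = 1)
    (hcocycle :
      (Algebra.TensorProduct.assoc R R R H H H) (F ⊗ₜ (1:H)) *
          (Algebra.TensorProduct.assoc R R R H H H)
            ((TensorProduct.map Coalgebra.comul LinearMap.id) F) =
        ((1:H) ⊗ₜ F) * (TensorProduct.map LinearMap.id Coalgebra.comul) F)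
    (hcounitl : (TensorProduct.lid R H)
      ((TensorProduct.map Coalgebra.counit LinearMap.id) F) = 1)
    (hcounitr : (TensorProduct.rid R H)
      ((TensorProduct.map LinearMap.id Coalgebra.counit) F) = 1) :
    let ΔF : H →ₗ[R] H ⊗[R] H :=
      (LinearMap.mulLeft R F) ∘ₗ (LinearMap.mulRight R Finv) ∘ₗ Coalgebra.comul
    ∀ x : H,
      (Algebra.TensorProduct.assoc R R R H H H)
          ((TensorProduct.map ΔF LinearMap.id) (ΔF x)) =
        (TensorProduct.map LinearMap.id ΔF) (ΔF x) :=
  twisted_coproduct_coassoc_general F Finv hinv hcocycle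
end

section
/- Let H be a cocommutative Hopf algebra and F ∈ H⊗H an invertible twist satisfying the cocycle equation and counit conditions. Then R = F₂₁·F⁻¹ satisfies the quantum Yang–Baxter equation R₁₂R₁₃R₂₃ = R₂₃R₁₃R₁₂ in H⊗H⊗H. -/
/-! For cocommutative `H`, `R = F₂₁F⁻¹` is a triangular structure for the twisted coproduct
`Δ_F = F Δ(-) F⁻¹`. Cocommutativity makes `Δ` compatible with permutations of tensor legs, so
transporting the cocycle identity along `x ⊗ y ⊗ z ↦ y ⊗ z ⊗ x` and `x ⊗ y ⊗ z ↦ x ⊗ z ⊗ y` and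
eliminating between the results gives `R₁₃R₂₃ = F₁₂ (Δ ⊗ id)(R) F₁₂⁻¹`; flipping the first two
legs gives `R₂₃R₁₃ = (F₂₁)₁₂ (Δ ⊗ id)(R) ((F⁻¹)₂₁)₁₂`. As `R₁₂F₁₂ = (F₂₁)₁₂` and
`((F⁻¹)₂₁)₁₂R₁₂ = (F⁻¹)₁₂`, both sides of the Yang–Baxter equation equal
`(F₂₁)₁₂ (Δ ⊗ id)(R) (F⁻¹)₁₂`.
-/

open TensorProduct

namespace TripleTensor

noncomputable section

variable (R A : Type*) [CommSemiring R] [Semiring A]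

local notation "τ" => Algebra.TensorProduct.comm R A A

section Algebra

variable [Algebra R A]

def inc12 : A ⊗[R] A →ₐ[R] A ⊗[R] (A ⊗[R] A) :=
  (Algebra.TensorProduct.assoc R R R A A A).toAlgHom.comp Algebra.TensorProduct.includeLeft

def inc13 : A ⊗[R] A →ₐ[R] A ⊗[R] (A ⊗[R] A) :=
  Algebra.TensorProduct.map (AlgHom.id R A) Algebra.TensorProduct.includeRight

def inc23 : A ⊗[R] A →ₐ[R] A ⊗[R] (A ⊗[R] A) :=
  Algebra.TensorProduct.includeRight

def swap12 : A ⊗[R] (A ⊗[R] A) ≃ₐ[R] A ⊗[R] (A ⊗[R] A) :=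
  ((Algebra.TensorProduct.assoc R R R A A A).symm.trans
    (Algebra.TensorProduct.congr (Algebra.TensorProduct.comm R A A) AlgEquiv.refl)).trans
    (Algebra.TensorProduct.assoc R R R A A A)

def swap23 : A ⊗[R] (A ⊗[R] A) ≃ₐ[R] A ⊗[R] (A ⊗[R] A) :=
  Algebra.TensorProduct.congr AlgEquiv.refl (Algebra.TensorProduct.comm R A A)

def cycle : A ⊗[R] (A ⊗[R] A) ≃ₐ[R] A ⊗[R] (A ⊗[R] A) :=
  (Algebra.TensorProduct.comm R A (A ⊗[R] A)).trans (Algebra.TensorProduct.assoc R R R A A A)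

variable {R A}

@[simp] lemma inc12_tmul (x y : A) : inc12 R A (x ⊗ₜ y) = x ⊗ₜ (y ⊗ₜ 1) := rfl
@[simp] lemma inc13_tmul (x y : A) : inc13 R A (x ⊗ₜ y) = x ⊗ₜ (1 ⊗ₜ y) := rfl
@[simp] lemma inc23_tmul (x y : A) : inc23 R A (x ⊗ₜ y) = 1 ⊗ₜ (x ⊗ₜ y) := rfl
@[simp] lemma swap12_tmul (x y z : A) :
    swap12 R A (x ⊗ₜ (y ⊗ₜ z)) = y ⊗ₜ (x ⊗ₜ z) := rfl
@[simp] lemma swap23_tmul (x y z : A) :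
    swap23 R A (x ⊗ₜ (y ⊗ₜ z)) = x ⊗ₜ (z ⊗ₜ y) := rfl
@[simp] lemma cycle_tmul (x y z : A) :
    cycle R A (x ⊗ₜ (y ⊗ₜ z)) = y ⊗ₜ (z ⊗ₜ x) := rfl

@[simp] lemma cycle_inc12 (w : A ⊗[R] A) : cycle R A (inc12 R A w) = inc13 R A (τ w) := by
  induction w using TensorProduct.induction_on <;> simp_all

@[simp] lemma cycle_inc23 (w : A ⊗[R] A) : cycle R A (inc23 R A w) = inc12 R A w := by
  induction w using TensorProduct.induction_on <;> simp_all

@[simp] lemma swap23_inc12 (w : A ⊗[R] A) : swap23 R A (inc12 R A w) = inc13 R A w := by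
  induction w using TensorProduct.induction_on <;> simp_all

@[simp] lemma swap23_inc23 (w : A ⊗[R] A) : swap23 R A (inc23 R A w) = inc23 R A (τ w) := by
  induction w using TensorProduct.induction_on <;> simp_all

@[simp] lemma swap12_inc12 (w : A ⊗[R] A) : swap12 R A (inc12 R A w) = inc12 R A (τ w) := by
  induction w using TensorProduct.induction_on <;> simp_all

@[simp] lemma swap12_inc13 (w : A ⊗[R] A) : swap12 R A (inc13 R A w) = inc23 R A w := by
  induction w using TensorProduct.induction_on <;> simp_all

@[simp] lemma swap12_inc23 (w : A ⊗[R] A) : swap12 R A (inc23 R A w) = inc13 R A w := by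
  induction w using TensorProduct.induction_on <;> simp_all

def twistRMatrix (F : (A ⊗[R] A)ˣ) : A ⊗[R] A := τ F * ↑F⁻¹

lemma twistRMatrix_mul (F : (A ⊗[R] A)ˣ) : twistRMatrix F * F = τ F := by
  simp [twistRMatrix, mul_assoc]

lemma comm_inv_mul_twistRMatrix (F : (A ⊗[R] A)ˣ) :
    τ ↑F⁻¹ * twistRMatrix F = ↑F⁻¹ := by
  rw [twistRMatrix, ← mul_assoc, ← map_mul, Units.inv_mul, map_one, one_mul]

end Algebra

section Bialgebra

variable [Bialgebra R A]

def comul12 : A ⊗[R] A →ₐ[R] A ⊗[R] (A ⊗[R] A) :=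
  (Algebra.TensorProduct.assoc R R R A A A).toAlgHom.comp
    (Algebra.TensorProduct.map (Bialgebra.comulAlgHom R A) (AlgHom.id R A))

def comul23 : A ⊗[R] A →ₐ[R] A ⊗[R] (A ⊗[R] A) :=
  Algebra.TensorProduct.map (AlgHom.id R A) (Bialgebra.comulAlgHom R A)

variable {R A}

lemma comul12_tmul (x y : A) :
    comul12 R A (x ⊗ₜ y) = inc12 R A (Coalgebra.comul x) * (1 ⊗ₜ (1 ⊗ₜ y)) := by
  have hsplit : x ⊗ₜ[R] y = (x ⊗ₜ 1) * (1 ⊗ₜ y) := by simp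
  rw [hsplit, map_mul]
  simp [comul12, inc12, Algebra.TensorProduct.one_def]

lemma comul23_tmul (x y : A) :
    comul23 R A (x ⊗ₜ y) = inc23 R A (Coalgebra.comul y) * (x ⊗ₜ (1 ⊗ₜ 1)) := by
  have hsplit : x ⊗ₜ[R] y = (1 ⊗ₜ y) * (x ⊗ₜ 1) := by simp
  rw [hsplit, map_mul]
  simp [comul23, inc23, Algebra.TensorProduct.one_def]

lemma cycle_comul23 (w : A ⊗[R] A) : cycle R A (comul23 R A w) = comul12 R A (τ w) := by
  induction w using TensorProduct.induction_on <;> simp_all [comul12_tmul, comul23_tmul]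

variable [Coalgebra.IsCocomm R A]

@[simp] lemma comm_comul (x : A) : τ (Coalgebra.comul x) = Coalgebra.comul x :=
  Coalgebra.comm_comul R x

lemma cycle_comul12 (w : A ⊗[R] A) :
    cycle R A (comul12 R A w) = swap23 R A (comul12 R A w) := by
  induction w using TensorProduct.induction_on <;> simp_all [comul12_tmul]

lemma swap23_comul23 (w : A ⊗[R] A) : swap23 R A (comul23 R A w) = comul23 R A w := by
  induction w using TensorProduct.induction_on <;> simp_all [comul23_tmul]

lemma swap12_comul12 (w : A ⊗[R] A) : swap12 R A (comul12 R A w) = comul12 R A w := by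
  induction w using TensorProduct.induction_on <;> simp_all [comul12_tmul]

def IsTwistCocycle (F : A ⊗[R] A) : Prop :=
  inc12 R A F * comul12 R A F = inc23 R A F * comul23 R A F

theorem inc13_mul_inc23_twistRMatrix {F : (A ⊗[R] A)ˣ}
    (hF : IsTwistCocycle (F : A ⊗[R] A)) :
    inc13 R A (twistRMatrix F) * inc23 R A (twistRMatrix F) =
      inc12 R A F * comul12 R A (twistRMatrix F) * inc12 R A ↑F⁻¹ := by
  have hcycle := congrArg (cycle R A) hF
  simp only [map_mul, cycle_inc12, cycle_inc23, cycle_comul12, cycle_comul23] at hcycle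
  have hswap := congrArg (swap23 R A) hF
  simp only [map_mul, swap23_inc12, swap23_inc23, swap23_comul23] at hswap
  let U (f : A ⊗[R] A →ₐ[R] A ⊗[R] (A ⊗[R] A)) : (A ⊗[R] A)ˣ →* (A ⊗[R] (A ⊗[R] A))ˣ :=
    Units.map (f : A ⊗[R] A →* A ⊗[R] (A ⊗[R] A))
  let Fτ := Units.map (τ : A ⊗[R] A →* A ⊗[R] A) F
  -- `S = swap23 (comul12 F)` occurs in both transported identities and is eliminated
  -- between them
  let S := Units.map (swap23 R A : A ⊗[R] (A ⊗[R] A) →* A ⊗[R] (A ⊗[R] A))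
    (U (comul12 R A) F)
  have hcocycle : U (inc12 R A) F * U (comul12 R A) F = U (inc23 R A) F * U (comul23 R A) F :=
    Units.ext hF
  have hcycleU : U (inc13 R A) Fτ * S = U (inc12 R A) F * U (comul12 R A) Fτ := Units.ext hcycle
  have hswapU : U (inc13 R A) F * S = U (inc23 R A) Fτ * U (comul23 R A) F := Units.ext hswap
  have hunits : U (inc13 R A) (Fτ * F⁻¹) * U (inc23 R A) (Fτ * F⁻¹) =
      U (inc12 R A) F * U (comul12 R A) (Fτ * F⁻¹) * (U (inc12 R A) F)⁻¹ := by
    simp only [map_mul, map_inv]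
    rw [eq_inv_mul_of_mul_eq hcycleU.symm, eq_inv_mul_of_mul_eq hswapU,
      eq_inv_mul_of_mul_eq hcocycle.symm]
    group
  simpa [U, Fτ, twistRMatrix] using congrArg Units.val hunits

theorem inc23_mul_inc13_twistRMatrix {F : (A ⊗[R] A)ˣ}
    (hF : IsTwistCocycle (F : A ⊗[R] A)) :
    inc23 R A (twistRMatrix F) * inc13 R A (twistRMatrix F) =
      inc12 R A (τ F) * comul12 R A (twistRMatrix F) * inc12 R A (τ ↑F⁻¹) := by
  simpa only [map_mul, swap12_inc12, swap12_inc13, swap12_inc23, swap12_comul12]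
    using congrArg (swap12 R A) (inc13_mul_inc23_twistRMatrix hF)

theorem twistRMatrix_yangBaxter {F : (A ⊗[R] A)ˣ} (hF : IsTwistCocycle (F : A ⊗[R] A)) :
    inc12 R A (twistRMatrix F) * inc13 R A (twistRMatrix F) * inc23 R A (twistRMatrix F) =
      inc23 R A (twistRMatrix F) * inc13 R A (twistRMatrix F) * inc12 R A (twistRMatrix F) := by
  rw [mul_assoc, inc13_mul_inc23_twistRMatrix hF, inc23_mul_inc13_twistRMatrix hF]
  simp only [← mul_assoc, ← map_mul, twistRMatrix_mul]
  simp only [mul_assoc, ← map_mul, comm_inv_mul_twistRMatrix]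

end Bialgebra

end

end TripleTensor

theorem twist_rmatrix_qybe_general {R : Type*} [CommRing R]
    {H : Type*} [Ring H] [HopfAlgebra R H]
    (hcocomm : ∀ x : H,
      (TensorProduct.comm R H H) (Coalgebra.comul x) = Coalgebra.comul x)
    (F Finv : H ⊗[R] H)
    (hinv : F * Finv = 1 ∧ Finv * F = 1)
    (hcocycle :
      (Algebra.TensorProduct.assoc R R R H H H) (F ⊗ₜ (1:H)) *
          (Algebra.TensorProduct.assoc R R R H H H)
            ((TensorProduct.map Coalgebra.comul LinearMap.id) F) =
        ((1:H) ⊗ₜ F) * (TensorProduct.map LinearMap.id Coalgebra.comul) F) :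
    let Rm : H ⊗[R] H := (TensorProduct.comm R H H) F * Finv
    let R12 : H ⊗[R] (H ⊗[R] H) :=
      (Algebra.TensorProduct.assoc R R R H H H) (Rm ⊗ₜ (1:H))
    let R13 : H ⊗[R] (H ⊗[R] H) :=
      (TensorProduct.map LinearMap.id
        (Algebra.TensorProduct.includeRight (R := R) (A := H) (B := H)).toLinearMap) Rm
    let R23 : H ⊗[R] (H ⊗[R] H) := (1:H) ⊗ₜ Rm
    R12 * R13 * R23 = R23 * R13 * R12 := by
  have : Coalgebra.IsCocomm R H := ⟨LinearMap.ext hcocomm⟩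
  -- `R12`, `R13`, `R23` and `hcocycle` are `inc12`, `inc13`, `inc23` and `IsTwistCocycle` unfolded
  exact TripleTensor.twistRMatrix_yangBaxter (F := ⟨F, Finv, hinv.1, hinv.2⟩) hcocycle

/-- if `H` is a cocommutative Hopf algebra and `F ∈ H⊗H` an
invertible twist (cocycle equation and counit conditions), then
`R = F₂₁·F⁻¹` satisfies the quantum Yang–Baxter equation
`R₁₂R₁₃R₂₃ = R₂₃R₁₃R₁₂` in `H⊗H⊗H`. -/
theorem twist_rmatrix_qybe {R : Type*} [CommRing R]
    {H : Type*} [Ring H] [HopfAlgebra R H]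
    (hcocomm : ∀ x : H,
      (TensorProduct.comm R H H) (Coalgebra.comul x) = Coalgebra.comul x)
    (F Finv : H ⊗[R] H)
    (hinv : F * Finv = 1 ∧ Finv * F = 1)
    (hcocycle :
      (Algebra.TensorProduct.assoc R R R H H H) (F ⊗ₜ (1:H)) *
          (Algebra.TensorProduct.assoc R R R H H H)
            ((TensorProduct.map Coalgebra.comul LinearMap.id) F) =
        ((1:H) ⊗ₜ F) * (TensorProduct.map LinearMap.id Coalgebra.comul) F)
    (hcounitl : (TensorProduct.lid R H)
      ((TensorProduct.map Coalgebra.counit LinearMap.id) F) = 1)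
    (hcounitr : (TensorProduct.rid R H)
      ((TensorProduct.map LinearMap.id Coalgebra.counit) F) = 1) :
    let Rm : H ⊗[R] H := (TensorProduct.comm R H H) F * Finv
    let R12 : H ⊗[R] (H ⊗[R] H) :=
      (Algebra.TensorProduct.assoc R R R H H H) (Rm ⊗ₜ (1:H))
    let R13 : H ⊗[R] (H ⊗[R] H) :=
      (TensorProduct.map LinearMap.id
        (Algebra.TensorProduct.includeRight (R := R) (A := H) (B := H)).toLinearMap) Rm
    let R23 : H ⊗[R] (H ⊗[R] H) := (1:H) ⊗ₜ Rm
    R12 * R13 * R23 = R23 * R13 * R12 :=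
  twist_rmatrix_qybe_general hcocomm F Finv hinv hcocycle
end

section
/- In the root system of type D_n (n ≥ 3), Λ = {±eᵢ±eⱼ : 1 ≤ i < j ≤ n}, with initial root λ₀ = e₁+e₂, the set of constituent roots π = {λ ∈ Λ : λ₀−λ ∈ Λ, λ+λ₀ ∉ Λ, (λ₀−λ)+λ₀ ∉ Λ} equals {e₁±eⱼ, e₂±eⱼ : 3 ≤ j ≤ n}. -/
def La (n : ℕ) : Set (Fin n → ℝ) :=
  {v | ∃ i j : Fin n, i < j ∧ ∃ εi εj : ℝ,
    (εi = 1 ∨ εi = -1) ∧ (εj = 1 ∨ εj = -1) ∧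
    v = εi • (Pi.single i 1 : Fin n → ℝ) + εj • (Pi.single j 1 : Fin n → ℝ)}

lemma eval2 {n : ℕ} (i j k : Fin n) (a b : ℝ) :
    ((a • (Pi.single i 1 : Fin n → ℝ) + b • (Pi.single j 1 : Fin n → ℝ)) k : ℝ) =
      (if k = i then a else 0) + (if k = j then b else 0) := by
  simp [Pi.single_apply, mul_ite]

lemma La_coord {n : ℕ} {v : Fin n → ℝ} (h : v ∈ La n) (k : Fin n) :
    v k = 0 ∨ v k = 1 ∨ v k = -1 := by
  obtain ⟨i, j, hij, εi, εj, hi, hj, rfl⟩ := h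
  rw [eval2]
  have hne : i ≠ j := hij.ne
  rcases hi with rfl | rfl <;> rcases hj with rfl | rfl <;>
    by_cases h1 : k = i <;> by_cases h2 : k = j <;> simp_all <;> norm_num

lemma La_ne_zero {n : ℕ} {v : Fin n → ℝ} (h : v ∈ La n) : ∃ k, v k ≠ 0 := by
  obtain ⟨i, j, hij, εi, εj, hi, hj, rfl⟩ := h
  refine ⟨i, ?_⟩
  rw [eval2, if_pos rfl, if_neg hij.ne]
  rcases hi with rfl | rfl <;> norm_num

lemma La_not_three {n : ℕ} {v : Fin n → ℝ} (h : v ∈ La n) {a b c : Fin n}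
    (hab : a ≠ b) (hac : a ≠ c) (hbc : b ≠ c) :
    v a = 0 ∨ v b = 0 ∨ v c = 0 := by
  obtain ⟨i, j, hij, εi, εj, hi, hj, rfl⟩ := h
  have key : ∀ k : Fin n, k ≠ i → k ≠ j →
      ((εi • (Pi.single i 1 : Fin n → ℝ) + εj • (Pi.single j 1 : Fin n → ℝ)) k : ℝ) = 0 := by
    intro k h1 h2; rw [eval2]; simp [h1, h2]
  rcases (show (a ≠ i ∧ a ≠ j) ∨ (b ≠ i ∧ b ≠ j) ∨ (c ≠ i ∧ c ≠ j) by
      by_contra hc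
      push_neg at hc
      obtain ⟨h1, h2, h3⟩ := hc
      by_cases hA : a = i <;> by_cases hB : b = i <;> by_cases hC : c = i <;>
        simp_all) with ⟨h1, h2⟩ | ⟨h1, h2⟩ | ⟨h1, h2⟩
  · exact Or.inl (key a h1 h2)
  · exact Or.inr (Or.inl (key b h1 h2))
  · exact Or.inr (Or.inr (key c h1 h2))

lemma back_aux {n : ℕ} {z0 z1 p q j : Fin n} {s : ℝ} (hs : s = 1 ∨ s = -1)
    (hpj : p < j) (hqj : q < j) (hpq' : p ≠ q)
    (hpq : (Pi.single p 1 : Fin n → ℝ) + Pi.single q 1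
         = Pi.single z0 1 + Pi.single z1 1) :
    ((Pi.single p 1 : Fin n → ℝ) + s • (Pi.single j 1 : Fin n → ℝ)) ∈ La n ∧
    ((Pi.single z0 1 : Fin n → ℝ) + (Pi.single z1 1 : Fin n → ℝ))
        - ((Pi.single p 1 : Fin n → ℝ) + s • (Pi.single j 1 : Fin n → ℝ)) ∈ La n ∧
    ((Pi.single p 1 : Fin n → ℝ) + s • (Pi.single j 1 : Fin n → ℝ))
        + ((Pi.single z0 1 : Fin n → ℝ) + (Pi.single z1 1 : Fin n → ℝ)) ∉ La n ∧
    (((Pi.single z0 1 : Fin n → ℝ) + (Pi.single z1 1 : Fin n → ℝ))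
        - ((Pi.single p 1 : Fin n → ℝ) + s • (Pi.single j 1 : Fin n → ℝ)))
        + ((Pi.single z0 1 : Fin n → ℝ) + (Pi.single z1 1 : Fin n → ℝ)) ∉ La n := by
  have hpj' : p ≠ j := hpj.ne
  have hqj' : q ≠ j := hqj.ne
  have hLv : ((Pi.single z0 1 : Fin n → ℝ) + (Pi.single z1 1 : Fin n → ℝ))
      - ((Pi.single p 1 : Fin n → ℝ) + s • (Pi.single j 1 : Fin n → ℝ))
      = (Pi.single q 1 : Fin n → ℝ) + (-s) • (Pi.single j 1 : Fin n → ℝ) := by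
    rw [← hpq, neg_smul]; abel
  have hLp : ((Pi.single z0 1 : Fin n → ℝ) + (Pi.single z1 1 : Fin n → ℝ)) p = 1 := by
    rw [← hpq]; simp [Pi.single_apply, hpq', Ne.symm hpq']
  have hLq : ((Pi.single z0 1 : Fin n → ℝ) + (Pi.single z1 1 : Fin n → ℝ)) q = 1 := by
    rw [← hpq]; simp [Pi.single_apply, hpq', Ne.symm hpq']
  refine ⟨⟨p, j, hpj, 1, s, Or.inl rfl, hs, by rw [one_smul]⟩, ?_, ?_, ?_⟩
  · refine ⟨q, j, hqj, 1, -s, Or.inl rfl, ?_, by rw [hLv, one_smul]⟩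
    rcases hs with rfl | rfl
    · right; norm_num
    · left; norm_num
  · intro hmem
    have h2 := La_coord hmem p
    have hvp : ((Pi.single p 1 : Fin n → ℝ) + s • (Pi.single j 1 : Fin n → ℝ)) p = 1 := by
      simp [Pi.single_apply, hpj']
    rw [Pi.add_apply, hvp, hLp] at h2
    norm_num at h2
  · intro hmem
    have h2 := La_coord hmem q
    have hLvq : (((Pi.single z0 1 : Fin n → ℝ) + (Pi.single z1 1 : Fin n → ℝ))
        - ((Pi.single p 1 : Fin n → ℝ) + s • (Pi.single j 1 : Fin n → ℝ))) q = 1 := by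
      rw [hLv]; simp [Pi.single_apply, hqj']
    rw [Pi.add_apply, hLvq, hLq] at h2
    norm_num at h2

/-- in the root system of type `D_n` (`n ≥ 3`),
`Λ = {±eᵢ±eⱼ : i < j}`, with initial root `lam₀ = e₁+e₂`, the set of constituent
roots `π = {λ ∈ Λ : lam₀−λ ∈ Λ, λ+lam₀ ∉ Λ, (lam₀−λ)+lam₀ ∉ Λ}` equals
`{e₁±eⱼ, e₂±eⱼ : 3 ≤ j ≤ n}` (here written with 0-based indices). -/
theorem constituent_roots_Dn (n : ℕ) (hn : 3 ≤ n) :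
    let e : Fin n → (Fin n → ℝ) := fun i => Pi.single i 1
    let Λ : Set (Fin n → ℝ) :=
      {v | ∃ i j : Fin n, i < j ∧ ∃ εi εj : ℝ,
        (εi = 1 ∨ εi = -1) ∧ (εj = 1 ∨ εj = -1) ∧ v = εi • e i + εj • e j}
    let e₁ := e ⟨0, by omega⟩
    let e₂ := e ⟨1, by omega⟩
    let lam₀ := e₁ + e₂
    {lam ∈ Λ | lam₀ - lam ∈ Λ ∧ lam + lam₀ ∉ Λ ∧ (lam₀ - lam) + lam₀ ∉ Λ} =
      {v | ∃ j : Fin n, 2 ≤ (j : ℕ) ∧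
        (v = e₁ + e j ∨ v = e₁ - e j ∨ v = e₂ + e j ∨ v = e₂ - e j)} := by
  intro e Λ e₁ e₂ lam₀
  have h0 : (0 : ℕ) < n := by omega
  have h1 : (1 : ℕ) < n := by omega
  have hΛ : Λ = La n := rfl
  have he1 : e₁ = (Pi.single (⟨0, h0⟩ : Fin n) 1 : Fin n → ℝ) := rfl
  have he2 : e₂ = (Pi.single (⟨1, h1⟩ : Fin n) 1 : Fin n → ℝ) := rfl
  have hlam : lam₀ = (Pi.single (⟨0, h0⟩ : Fin n) 1 : Fin n → ℝ)
      + (Pi.single (⟨1, h1⟩ : Fin n) 1 : Fin n → ℝ) := rfl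
  have he : e = fun i => (Pi.single i 1 : Fin n → ℝ) := rfl
  rw [hΛ, hlam, he1, he2, he]
  set z0 : Fin n := ⟨0, h0⟩ with hz0
  set z1 : Fin n := ⟨1, h1⟩ with hz1
  have hz01 : z0 ≠ z1 := Fin.ne_of_val_ne (by norm_num)
  ext v
  simp only [Set.mem_setOf_eq, Set.mem_sep_iff]
  constructor
  · rintro ⟨⟨i, j, hij, εi, εj, hεi, hεj, hveq⟩, hmem1, -, -⟩
    have hijne : i ≠ j := hij.ne
    have hijv : (i : ℕ) < (j : ℕ) := hij
    by_cases hi0 : (i : ℕ) = 0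
    · have hiz : i = z0 := Fin.ext (by simpa using hi0)
      subst hiz
      -- show εi = 1 using coordinate z0 of lam₀ - v
      have hc := La_coord hmem1 z0
      have hval : ((Pi.single z0 1 : Fin n → ℝ) + (Pi.single z1 1 : Fin n → ℝ) - v) z0
          = 1 - εi := by
        rw [Pi.sub_apply, hveq, eval2, if_pos rfl, if_neg hijne, Pi.add_apply,
          Pi.single_apply, if_pos rfl, Pi.single_apply, if_neg hz01]
        ring
      rw [hval] at hc
      rcases hεi with rfl | rfl
      swap
      · norm_num at hc
      by_cases hj1 : (j : ℕ) = 1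
      · -- j = z1 : show contradiction, lam₀ - v = 0
        exfalso
        have hjz : j = z1 := Fin.ext (by simpa using hj1)
        subst hjz
        have hc2 := La_coord hmem1 z1
        have hval2 : ((Pi.single z0 1 : Fin n → ℝ) + (Pi.single z1 1 : Fin n → ℝ) - v) z1
            = 1 - εj := by
          rw [Pi.sub_apply, hveq, eval2, if_neg (Ne.symm hz01), if_pos rfl, Pi.add_apply,
            Pi.single_apply, if_neg (Ne.symm hz01), Pi.single_apply, if_pos rfl]
          ring
        rw [hval2] at hc2
        rcases hεj with rfl | rfl
        swap
        · norm_num at hc2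
        obtain ⟨k, hk⟩ := La_ne_zero hmem1
        apply hk
        rw [Pi.sub_apply, hveq, one_smul, one_smul]
        ring
      · -- j ≥ 2 : v = e₁ ± e j
        refine ⟨j, by omega, ?_⟩
        rcases hεj with rfl | rfl
        · left; rw [hveq, one_smul, one_smul]
        · right; left
          rw [hveq, one_smul, neg_one_smul, sub_eq_add_neg]
    · by_cases hi1 : (i : ℕ) = 1
      · have hiz : i = z1 := Fin.ext (by simpa using hi1)
        subst hiz
        have hjz0 : j ≠ z0 := by
          intro h; rw [h] at hijv; simp [hz0, hz1] at hijv
        have hjz1 : j ≠ z1 := Ne.symm hijne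
        have hc := La_coord hmem1 z1
        have hval : ((Pi.single z0 1 : Fin n → ℝ) + (Pi.single z1 1 : Fin n → ℝ) - v) z1
            = 1 - εi := by
          rw [Pi.sub_apply, hveq, eval2, if_pos rfl, if_neg hijne, Pi.add_apply,
            Pi.single_apply, if_neg (Ne.symm hz01), Pi.single_apply, if_pos rfl]
          ring
        rw [hval] at hc
        rcases hεi with rfl | rfl
        swap
        · norm_num at hc
        refine ⟨j, by omega, ?_⟩
        rcases hεj with rfl | rfl
        · right; right; left; rw [hveq, one_smul, one_smul]
        · right; right; right
          rw [hveq, one_smul, neg_one_smul, sub_eq_add_neg]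
      · -- i ≥ 2 : contradiction, lam₀ - v has ≥ 3 nonzero coordinates
        exfalso
        have hi2 : 2 ≤ (i : ℕ) := by omega
        have hz0i : z0 ≠ i := Fin.ne_of_val_ne (by simp [hz0]; omega)
        have hz1i : z1 ≠ i := Fin.ne_of_val_ne (by simp [hz1]; omega)
        have hz0j : z0 ≠ j := Fin.ne_of_val_ne (by simp [hz0]; omega)
        have hz1j : z1 ≠ j := Fin.ne_of_val_ne (by simp [hz1]; omega)
        rcases La_not_three hmem1 hz01 hz0i hz1i with h | h | h
        · rw [Pi.sub_apply, hveq, eval2, if_neg hz0i, if_neg hz0j, Pi.add_apply,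
            Pi.single_apply, if_pos rfl, Pi.single_apply, if_neg hz01] at h
          · norm_num at h
        · rw [Pi.sub_apply, hveq, eval2, if_neg hz1i, if_neg hz1j, Pi.add_apply,
            Pi.single_apply, if_neg (Ne.symm hz01), Pi.single_apply, if_pos rfl] at h
          norm_num at h
        · rw [Pi.sub_apply, hveq, eval2, if_pos rfl, if_neg hijne, Pi.add_apply,
            Pi.single_apply, if_neg (Ne.symm hz0i), Pi.single_apply,
            if_neg (Ne.symm hz1i)] at h
          rcases hεi with rfl | rfl <;> norm_num at h
  · rintro ⟨j, hj2, hv | hv | hv | hv⟩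
    all_goals subst hv
    · have h := back_aux (z0 := z0) (z1 := z1) (p := z0) (q := z1) (j := j)
        (Or.inl rfl) (Fin.lt_def.mpr (by simp [hz0]; omega))
        (Fin.lt_def.mpr (by simp [hz1]; omega)) hz01 rfl
      rw [one_smul] at h
      exact ⟨h.1, h.2.1, h.2.2.1, h.2.2.2⟩
    · have h := back_aux (z0 := z0) (z1 := z1) (p := z0) (q := z1) (j := j)
        (Or.inr rfl) (Fin.lt_def.mpr (by simp [hz0]; omega))
        (Fin.lt_def.mpr (by simp [hz1]; omega)) hz01 rfl
      rw [neg_one_smul, ← sub_eq_add_neg] at h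
      exact ⟨h.1, h.2.1, h.2.2.1, h.2.2.2⟩
    · have h := back_aux (z0 := z0) (z1 := z1) (p := z1) (q := z0) (j := j)
        (Or.inl rfl) (Fin.lt_def.mpr (by simp [hz1]; omega))
        (Fin.lt_def.mpr (by simp [hz0]; omega)) (Ne.symm hz01) (by abel)
      rw [one_smul] at h
      exact ⟨h.1, h.2.1, h.2.2.1, h.2.2.2⟩
    · have h := back_aux (z0 := z0) (z1 := z1) (p := z1) (q := z0) (j := j)
        (Or.inr rfl) (Fin.lt_def.mpr (by simp [hz1]; omega))
        (Fin.lt_def.mpr (by simp [hz0]; omega)) (Ne.symm hz01) (by abel)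
      rw [neg_one_smul, ← sub_eq_add_neg] at h
      exact ⟨h.1, h.2.1, h.2.2.1, h.2.2.2⟩
end
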